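/- Decision procedure for S4: let φ be a modal formula and Λ its set of subformulas. Then ⊢_S4 φ if and only if ṽ(φ) = 2 for every partial level valuation ṽ ∈ PLV(Λ). -/
import Mathlib


/-- Modal formulas over signature Σ = {¬, □, →, ∨, ∧}. -/
inductive MF
  | var : ℕ → MF
  | neg : MF → MF
  | box : MF → MF
  | imp : MF → MF → MF
  | dis : MF → MF → MF
  | con : MF → MF → MF
deriving DecidableEq

/-- The three truth values 0, 1, 2. -/
inductive V3
  | z | o | t
deriving DecidableEq

/-- Designated values D = {1, 2}. -/
def Des : Set V3 := {V3.o, V3.t}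

def negOp : V3 → Set V3
  | .z => {.o, .t}
  | .o => {.z}
  | .t => {.z}

def boxOp : V3 → Set V3
  | .z => {.z}
  | .o => {.z}
  | .t => {.t}

def impOp : V3 → V3 → Set V3
  | .z, .z => {.o, .t}
  | .z, .o => {.o, .t}
  | .z, .t => {.t}
  | .o, .z => {.z}
  | .o, .o => {.o, .t}
  | .o, .t => {.t}
  | .t, .z => {.z}
  | .t, .o => {.o}
  | .t, .t => {.t}

def disOp : V3 → V3 → Set V3
  | .z, .z => {.z}
  | .z, .o => {.o, .t}
  | .o, .z => {.o, .t}
  | .o, .o => {.o, .t}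
  | _, _ => {.t}

def conOp : V3 → V3 → Set V3
  | .z, _ => {.z}
  | _, .z => {.z}
  | .t, .t => {.t}
  | _, _ => {.o}

/-- Valuations over the reduced Nmatrix M'_S4. -/
def IsVal (v : MF → V3) : Prop :=
  (∀ α, v (.neg α) ∈ negOp (v α)) ∧
  (∀ α, v (.box α) ∈ boxOp (v α)) ∧
  (∀ α β, v (.imp α β) ∈ impOp (v α) (v β)) ∧
  (∀ α β, v (.dis α β) ∈ disOp (v α) (v β)) ∧
  (∀ α β, v (.con α β) ∈ conOp (v α) (v β))

/-- The levels L_k. -/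
def LevelS4 : ℕ → Set (MF → V3)
  | 0 => {v | IsVal v}
  | (k+1) => {v ∈ LevelS4 k | ∀ α, (∀ w ∈ LevelS4 k, w α ∈ Des) → v α = V3.t}

/-- Level valuations L'_S4 = ⋂_{k ≥ 0} L_k. -/
def LVS4 : Set (MF → V3) := ⋂ k, LevelS4 k

/-- Theorems of the Hilbert calculus H_S4 : classical propositional axioms over
{¬,→,∨,∧}, plus K, T, 4, with modus ponens and necessitation. -/
inductive S4Thm : MF → Prop
  | ax1 (α β : MF) : S4Thm (α.imp (β.imp α))
  | ax2 (α β γ : MF) : S4Thm ((α.imp (β.imp γ)).imp ((α.imp β).imp (α.imp γ)))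
  | ax3 (α β : MF) : S4Thm (α.imp (β.imp (α.con β)))
  | ax4 (α β : MF) : S4Thm ((α.con β).imp α)
  | ax5 (α β : MF) : S4Thm ((α.con β).imp β)
  | ax6 (α β : MF) : S4Thm (α.imp (α.dis β))
  | ax7 (α β : MF) : S4Thm (β.imp (α.dis β))
  | ax8 (α β γ : MF) : S4Thm ((α.imp γ).imp ((β.imp γ).imp ((α.dis β).imp γ)))
  | ax9 (α β : MF) : S4Thm ((β.imp α).imp ((β.imp α.neg).imp β.neg))
  | ax10 (α β : MF) : S4Thm (α.imp (α.neg.imp β))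
  | dne (α : MF) : S4Thm (α.neg.neg.imp α)
  | axK (α β : MF) : S4Thm ((α.imp β).box.imp (α.box.imp β.box))
  | axT (α : MF) : S4Thm (α.box.imp α)
  | axFour (α : MF) : S4Thm (α.box.imp α.box.box)
  | mp {α β : MF} : S4Thm (α.imp β) → S4Thm α → S4Thm β
  | nec {α : MF} : S4Thm α → S4Thm α.box

/-- Γ ⊢_S4 φ : either φ is a theorem, or some β₁,…,βₙ ∈ Γ (n ≥ 1) give a theorem
β₁ → (β₂ → (… → (βₙ → φ)…)). -/
def S4Deriv (Γ : Set MF) (φ : MF) : Prop :=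
  S4Thm φ ∨ ∃ l : List MF, l ≠ [] ∧ (∀ β ∈ l, β ∈ Γ) ∧ S4Thm (l.foldr MF.imp φ)

/-- Δ is φ-saturated (w.r.t. ⊢_S4). -/
def SatS4 (Δ : Set MF) (φ : MF) : Prop :=
  ¬ S4Deriv Δ φ ∧ ∀ α ∉ Δ, S4Deriv (insert α Δ) φ

open Classical in
/-- The canonical function v_Δ. -/
noncomputable def vDeltaS4 (Δ : Set MF) : MF → V3 :=
  fun α => if MF.box α ∈ Δ then V3.t else if α ∈ Δ then V3.o else V3.z

/-- Λ is closed under (immediate, hence all) subformulas. -/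
def SubClosed (Λ : Set MF) : Prop :=
  (∀ α, MF.neg α ∈ Λ → α ∈ Λ) ∧
  (∀ α, MF.box α ∈ Λ → α ∈ Λ) ∧
  (∀ α β, MF.imp α β ∈ Λ → α ∈ Λ ∧ β ∈ Λ) ∧
  (∀ α β, MF.dis α β ∈ Λ → α ∈ Λ ∧ β ∈ Λ) ∧
  (∀ α β, MF.con α β ∈ Λ → α ∈ Λ ∧ β ∈ Λ)

/-- Partial valuations with domain Λ (modelled as total functions constrained on Λ). -/
def IsPVal (Λ : Set MF) (v : MF → V3) : Prop :=
  (∀ α, MF.neg α ∈ Λ → v (.neg α) ∈ negOp (v α)) ∧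
  (∀ α, MF.box α ∈ Λ → v (.box α) ∈ boxOp (v α)) ∧
  (∀ α β, MF.imp α β ∈ Λ → v (.imp α β) ∈ impOp (v α) (v β)) ∧
  (∀ α β, MF.dis α β ∈ Λ → v (.dis α β) ∈ disOp (v α) (v β)) ∧
  (∀ α β, MF.con α β ∈ Λ → v (.con α β) ∈ conOp (v α) (v β))

/-- PLV'(Λ): partial' level valuations over Λ (witnesses amongst level valuations). -/
def PLV' (Λ : Set MF) : Set (MF → V3) :=
  {v | IsPVal Λ v ∧ ∀ α ∈ Λ, v α = V3.o →
    ∃ w ∈ LVS4, w α = V3.z ∧ ∀ β ∈ Λ, v β = V3.t → w β = V3.t}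

/-- PLV(Λ): partial level valuations over Λ, defined as the largest subset of
PV(Λ) whose condition is witnessed inside itself. -/
def PLV (Λ : Set MF) : Set (MF → V3) :=
  ⋃₀ {S | (∀ v ∈ S, IsPVal Λ v) ∧
      ∀ v ∈ S, ∀ α ∈ Λ, v α = V3.o →
        ∃ w ∈ S, w α = V3.z ∧ ∀ β ∈ Λ, v β = V3.t → w β = V3.t}

/-- Set of subformulas of a modal formula. -/
def MF.subf : MF → Finset MF
  | .var n => {.var n}
  | .neg α => insert (.neg α) α.subf
  | .box α => insert (.box α) α.subf
  | .imp α β => insert (.imp α β) (α.subf ∪ β.subf)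
  | .dis α β => insert (.dis α β) (α.subf ∪ β.subf)
  | .con α β => insert (.con α β) (α.subf ∪ β.subf)


namespace S4Aux
open MF V3

lemma thmI (a : MF) : S4Thm (a.imp a) :=
  S4Thm.mp (S4Thm.mp (S4Thm.ax2 a (a.imp a) a) (S4Thm.ax1 a (a.imp a))) (S4Thm.ax1 a a)

/-- Proofs from a finite list of hypotheses. -/
inductive Prf : List MF → MF → Prop
  | hyp {Γ α} : α ∈ Γ → Prf Γ α
  | ax {Γ α} : S4Thm α → Prf Γ α
  | mp {Γ α β} : Prf Γ (α.imp β) → Prf Γ α → Prf Γ β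

lemma Prf.weaken {Γ Γ' φ} (h : Prf Γ φ) (hsub : ∀ β ∈ Γ, β ∈ Γ') : Prf Γ' φ := by
  induction h with
  | hyp h => exact .hyp (hsub _ h)
  | ax h => exact .ax h
  | mp _ _ ih1 ih2 => exact .mp ih1 ih2

lemma Prf.ded_aux : ∀ {Γ' φ}, Prf Γ' φ → ∀ a Γ, Γ' = a :: Γ → Prf Γ (a.imp φ) := by
  intro Γ' φ h
  induction h with
  | hyp hmem =>
    intro a Γ hΓ; subst hΓ
    rcases List.mem_cons.mp hmem with h | h
    · subst h; exact .ax (thmI _)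
    · exact .mp (.ax (S4Thm.ax1 _ a)) (.hyp h)
  | ax h => intro a Γ hΓ; exact .mp (.ax (S4Thm.ax1 _ a)) (.ax h)
  | mp h1 h2 ih1 ih2 =>
    intro a Γ hΓ
    exact .mp (.mp (.ax (S4Thm.ax2 _ _ _)) (ih1 a Γ hΓ)) (ih2 a Γ hΓ)

lemma Prf.ded {Γ a φ} (h : Prf (a :: Γ) φ) : Prf Γ (a.imp φ) := h.ded_aux a Γ rfl

lemma prf_nil_aux : ∀ {Γ φ}, Prf Γ φ → Γ = [] → S4Thm φ := by
  intro Γ φ h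
  induction h with
  | hyp hmem => intro hΓ; subst hΓ; simp at hmem
  | ax h => intro _; exact h
  | mp h1 h2 ih1 ih2 => intro hΓ; exact S4Thm.mp (ih1 hΓ) (ih2 hΓ)

lemma prf_nil {φ} (h : Prf [] φ) : S4Thm φ := prf_nil_aux h rfl

lemma prf_of_fold {l : List MF} {φ} (h : S4Thm (l.foldr MF.imp φ)) : Prf l φ := by
  have main : ∀ (l : List MF) (Γ : List MF) (φ : MF), Prf Γ (l.foldr MF.imp φ) →
      (∀ β ∈ l, β ∈ Γ) → Prf Γ φ := by
    intro l
    induction l with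
    | nil => intro Γ φ h _; exact h
    | cons b l ih =>
      intro Γ φ h hsub
      exact ih Γ φ (.mp h (.hyp (hsub b (by simp)))) (fun β hβ => hsub β (by simp [hβ]))
  exact main l l φ (.ax h) (fun β hβ => hβ)

lemma thm_comp {a b c : MF} (h1 : S4Thm (a.imp b)) (h2 : S4Thm (b.imp c)) :
    S4Thm (a.imp c) :=
  S4Thm.mp (S4Thm.mp (S4Thm.ax2 a b c) (S4Thm.mp (S4Thm.ax1 (b.imp c) a) h2)) h1

lemma thm_prefixMono {c x y : MF} (h : S4Thm (x.imp y)) : S4Thm ((c.imp x).imp (c.imp y)) :=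
  S4Thm.mp (S4Thm.ax2 c x y) (S4Thm.mp (S4Thm.ax1 (x.imp y) c) h)

lemma thmC (a b c : MF) : S4Thm ((a.imp (b.imp c)).imp (b.imp (a.imp c))) := by
  apply prf_nil
  apply Prf.ded; apply Prf.ded; apply Prf.ded
  have h1 : Prf [a, b, a.imp (b.imp c)] (a.imp (b.imp c)) := .hyp (by simp)
  have h2 : Prf [a, b, a.imp (b.imp c)] a := .hyp (by simp)
  have h3 : Prf [a, b, a.imp (b.imp c)] b := .hyp (by simp)
  exact .mp (.mp h1 h2) h3

lemma thm_exch (a φ : MF) : ∀ l : List MF,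
    S4Thm ((l.foldr MF.imp (a.imp φ)).imp (a.imp (l.foldr MF.imp φ)))
  | [] => thmI _
  | c :: l => thm_comp (thm_prefixMono (thm_exch a φ l)) (thmC c a (l.foldr MF.imp φ))

lemma fold_of_prf : ∀ {l : List MF} {φ}, Prf l φ → S4Thm (l.foldr MF.imp φ)
  | [], _, h => prf_nil h
  | _ :: _, _, h => S4Thm.mp (thm_exch _ _ _) (fold_of_prf h.ded)

/-- derivability, list form -/
def Dv (Γ : Set MF) (φ : MF) : Prop := ∃ l : List MF, (∀ β ∈ l, β ∈ Γ) ∧ Prf l φ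

lemma dv_iff {Γ φ} : S4Deriv Γ φ ↔ Dv Γ φ := by
  constructor
  · rintro (h | ⟨l, _, hsub, h⟩)
    · exact ⟨[], by simp, .ax h⟩
    · exact ⟨l, hsub, prf_of_fold h⟩
  · rintro ⟨l, hsub, h⟩
    rcases l with _ | ⟨b, l⟩
    · exact Or.inl (prf_nil h)
    · exact Or.inr ⟨b :: l, by simp, hsub, fold_of_prf h⟩


lemma prf_cpos {Γ : List MF} {a b : MF} (h : Prf Γ (a.imp b)) :
    Prf Γ (b.neg.imp a.neg) := by
  apply Prf.ded
  have w1 : Prf (b.neg :: Γ) (a.imp b) := h.weaken (by intro β hβ; simp [hβ])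
  have w2 : Prf (b.neg :: Γ) (a.imp b.neg) :=
    .mp (.ax (S4Thm.ax1 b.neg a)) (.hyp (by simp))
  exact .mp (.mp (.ax (S4Thm.ax9 b a)) w1) w2

lemma prf_caseSplit {Γ : List MF} {a φ : MF} (h1 : Prf Γ (a.imp φ))
    (h2 : Prf Γ (a.neg.imp φ)) : Prf Γ φ := by
  have c1 : Prf Γ (φ.neg.imp a.neg) := prf_cpos h1
  have c2 : Prf Γ (φ.neg.imp a.neg.neg) := prf_cpos h2
  have n : Prf Γ φ.neg.neg := .mp (.mp (.ax (S4Thm.ax9 a.neg φ.neg)) c1) c2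
  exact .mp (.ax (S4Thm.dne φ)) n

lemma thm_boxMono {a b : MF} (h : S4Thm (a.imp b)) : S4Thm (a.box.imp b.box) :=
  S4Thm.mp (S4Thm.axK a b) (S4Thm.nec h)

lemma thm_foldBox (γ : MF) : ∀ l : List MF,
    S4Thm ((l.foldr MF.imp γ).box.imp ((l.map MF.box).foldr MF.imp γ.box))
  | [] => thmI _
  | b :: l => thm_comp (S4Thm.axK b (l.foldr MF.imp γ))
      (thm_prefixMono (thm_foldBox γ l))

/-! ### Derivability facts -/

lemma dv_mono {Γ Γ' : Set MF} {φ} (h : Dv Γ φ) (hs : Γ ⊆ Γ') : Dv Γ' φ := by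
  obtain ⟨l, hl, hp⟩ := h; exact ⟨l, fun β hβ => hs (hl β hβ), hp⟩

lemma dv_of_thm {Γ : Set MF} {φ} (h : S4Thm φ) : Dv Γ φ := ⟨[], by simp, .ax h⟩

lemma dv_of_mem {Γ : Set MF} {φ} (h : φ ∈ Γ) : Dv Γ φ := ⟨[φ], by simpa, .hyp (by simp)⟩

lemma dv_mp {Γ : Set MF} {a b : MF} (h1 : Dv Γ (a.imp b)) (h2 : Dv Γ a) : Dv Γ b := by
  obtain ⟨l1, hl1, hp1⟩ := h1
  obtain ⟨l2, hl2, hp2⟩ := h2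
  refine ⟨l1 ++ l2, ?_, ?_⟩
  · intro β hβ; rcases List.mem_append.mp hβ with h | h
    exacts [hl1 β h, hl2 β h]
  exact .mp (hp1.weaken (by intro β hβ; simp [hβ])) (hp2.weaken (by intro β hβ; simp [hβ]))

/-- deduction theorem for `Dv` -/
lemma dv_ded {Γ : Set MF} {a φ : MF} (h : Dv (insert a Γ) φ) : Dv Γ (a.imp φ) := by
  obtain ⟨l, hl, hp⟩ := h
  refine ⟨l.filter (· ≠ a), ?_, ?_⟩
  · intro β hβ
    have h1 := List.of_mem_filter hβ
    have h2 := List.mem_of_mem_filter hβ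
    rcases hl β h2 with h | h
    · simp at h1; exact absurd h h1
    · exact h
  · apply Prf.ded
    apply hp.weaken
    intro β hβ
    by_cases hba : β = a
    · simp [hba]
    · simp only [List.mem_cons]
      right; exact List.mem_filter.mpr ⟨hβ, by simpa⟩

lemma dv_cut {Γ : Set MF} {a φ : MF} (h1 : Dv Γ a) (h2 : Dv (insert a Γ) φ) : Dv Γ φ :=
  dv_mp (dv_ded h2) h1

/-! ### Lindenbaum -/

lemma lindenbaum {Γ : Set MF} {φ : MF} (h : ¬ Dv Γ φ) :
    ∃ Δ, Γ ⊆ Δ ∧ SatS4 Δ φ := by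
  have hz := zorn_subset_nonempty {Δ : Set MF | ¬ Dv Δ φ} ?_ Γ h
  · obtain ⟨Δ, hsub, hmax⟩ := hz
    refine ⟨Δ, hsub, ?_, ?_⟩
    · intro hd; exact hmax.1 (dv_iff.mp hd)
    · intro α hα
      by_contra hd
      have hmem : insert α Δ ∈ {Δ : Set MF | ¬ Dv Δ φ} := fun hdv => hd (dv_iff.mpr hdv)
      have : insert α Δ ⊆ Δ := hmax.2 hmem (Set.subset_insert α Δ)
      exact hα (this (Set.mem_insert α Δ))
  · intro c hc hchain hne
    refine ⟨⋃₀ c, ?_, fun s hs => Set.subset_sUnion_of_mem hs⟩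
    rintro ⟨l, hl, hp⟩
    have : ∃ D ∈ c, ∀ β ∈ l, β ∈ D := by
      clear hp
      induction l with
      | nil => obtain ⟨D, hD⟩ := hne; exact ⟨D, hD, by simp⟩
      | cons b l ih =>
        obtain ⟨D, hD, hDl⟩ := ih (fun β hβ => hl β (by simp [hβ]))
        obtain ⟨E, hE, hbE⟩ := hl b (by simp)
        rcases hchain.total hD hE with hDE | hED
        · refine ⟨E, hE, fun β hβ => ?_⟩
          rcases List.mem_cons.mp hβ with rfl | hβ
          exacts [hbE, hDE (hDl β hβ)]
        · refine ⟨D, hD, fun β hβ => ?_⟩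
          rcases List.mem_cons.mp hβ with rfl | hβ
          exacts [hED hbE, hDl β hβ]
    obtain ⟨D, hD, hsub⟩ := this
    exact hc hD ⟨l, hsub, hp⟩


/-! ### Properties of saturated sets -/

section Sat
variable {Δ : Set MF} {φ : MF} (hΔ : SatS4 Δ φ)
include hΔ

lemma sat_not_dv : ¬ Dv Δ φ := fun h => hΔ.1 (dv_iff.mpr h)

lemma sat_mem_of_dv {α : MF} (h : Dv Δ α) : α ∈ Δ := by
  by_contra hα
  exact sat_not_dv hΔ (dv_cut h (dv_iff.mp (hΔ.2 α hα)))

lemma sat_mem_of_thm {α : MF} (h : S4Thm α) : α ∈ Δ := sat_mem_of_dv hΔ (dv_of_thm h)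

lemma sat_mp {α β : MF} (h1 : (α.imp β) ∈ Δ) (h2 : α ∈ Δ) : β ∈ Δ :=
  sat_mem_of_dv hΔ (dv_mp (dv_of_mem h1) (dv_of_mem h2))

lemma sat_boxT {α : MF} (h : α.box ∈ Δ) : α ∈ Δ := sat_mp hΔ (sat_mem_of_thm hΔ (S4Thm.axT α)) h

lemma sat_not_both {α : MF} (h1 : α ∈ Δ) (h2 : α.neg ∈ Δ) : False := by
  apply sat_not_dv hΔ
  exact dv_mp (dv_mp (dv_of_thm (S4Thm.ax10 α φ)) (dv_of_mem h1)) (dv_of_mem h2)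

lemma sat_neg_of_notMem {α : MF} (h : α ∉ Δ) : α.neg ∈ Δ := by
  by_contra hn
  have d1 : Dv Δ (α.imp φ) := dv_ded (dv_iff.mp (hΔ.2 α h))
  have d2 : Dv Δ (α.neg.imp φ) := dv_ded (dv_iff.mp (hΔ.2 α.neg hn))
  obtain ⟨l1, hl1, hp1⟩ := d1
  obtain ⟨l2, hl2, hp2⟩ := d2
  apply sat_not_dv hΔ
  refine ⟨l1 ++ l2, ?_, ?_⟩
  · intro β hβ; rcases List.mem_append.mp hβ with h | h
    exacts [hl1 β h, hl2 β h]
  · exact prf_caseSplit (hp1.weaken (by intro β hβ; simp [hβ]))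
      (hp2.weaken (by intro β hβ; simp [hβ]))

lemma sat_neg_iff {α : MF} : α.neg ∈ Δ ↔ α ∉ Δ :=
  ⟨fun h1 h2 => sat_not_both hΔ h2 h1, sat_neg_of_notMem hΔ⟩

lemma sat_imp_iff {α β : MF} : (α.imp β) ∈ Δ ↔ (α ∈ Δ → β ∈ Δ) := by
  constructor
  · exact fun h ha => sat_mp hΔ h ha
  · intro h
    by_cases ha : α ∈ Δ
    · exact sat_mem_of_dv hΔ (dv_mp (dv_of_thm (S4Thm.ax1 β α)) (dv_of_mem (h ha)))
    · have hn : α.neg ∈ Δ := sat_neg_of_notMem hΔ ha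
      apply sat_mem_of_dv hΔ
      refine ⟨[α.neg], by simpa, ?_⟩
      have hthm : S4Thm (α.neg.imp (α.imp β)) := prf_nil (Prf.ded (Prf.ded
        (.mp (.mp (.ax (S4Thm.ax10 α β)) (.hyp (by simp))) (.hyp (by simp)))))
      have hh : Prf [α.neg] α.neg := .hyp (by simp)
      exact .mp (.ax hthm) hh

lemma sat_dis_iff {α β : MF} : (α.dis β) ∈ Δ ↔ (α ∈ Δ ∨ β ∈ Δ) := by
  constructor
  · intro h
    by_contra hn
    push_neg at hn
    have hna : α.neg ∈ Δ := sat_neg_of_notMem hΔ hn.1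
    have hnb : β.neg ∈ Δ := sat_neg_of_notMem hΔ hn.2
    apply sat_not_dv hΔ
    have haφ : Dv Δ (α.imp φ) := by
      refine ⟨[α.neg], by simpa, ?_⟩
      have hthm : S4Thm (α.neg.imp (α.imp φ)) := prf_nil (Prf.ded (Prf.ded
        (.mp (.mp (.ax (S4Thm.ax10 α φ)) (.hyp (by simp))) (.hyp (by simp)))))
      have hh : Prf [α.neg] α.neg := .hyp (by simp)
      exact .mp (.ax hthm) hh
    have hbφ : Dv Δ (β.imp φ) := by
      refine ⟨[β.neg], by simpa, ?_⟩
      have hthm : S4Thm (β.neg.imp (β.imp φ)) := prf_nil (Prf.ded (Prf.ded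
        (.mp (.mp (.ax (S4Thm.ax10 β φ)) (.hyp (by simp))) (.hyp (by simp)))))
      have hh : Prf [β.neg] β.neg := .hyp (by simp)
      exact .mp (.ax hthm) hh
    exact dv_mp (dv_mp (dv_mp (dv_of_thm (S4Thm.ax8 α β φ)) haφ) hbφ) (dv_of_mem h)
  · rintro (h | h)
    · exact sat_mp hΔ (sat_mem_of_thm hΔ (S4Thm.ax6 α β)) h
    · exact sat_mp hΔ (sat_mem_of_thm hΔ (S4Thm.ax7 α β)) h

lemma sat_con_iff {α β : MF} : (α.con β) ∈ Δ ↔ (α ∈ Δ ∧ β ∈ Δ) := by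
  constructor
  · intro h
    exact ⟨sat_mp hΔ (sat_mem_of_thm hΔ (S4Thm.ax4 α β)) h,
      sat_mp hΔ (sat_mem_of_thm hΔ (S4Thm.ax5 α β)) h⟩
  · rintro ⟨h1, h2⟩
    exact sat_mp hΔ (sat_mp hΔ (sat_mem_of_thm hΔ (S4Thm.ax3 α β)) h1) h2

end Sat

/-! ### The canonical valuation -/

lemma vD_eq_t_iff {Δ : Set MF} {α : MF} : vDeltaS4 Δ α = V3.t ↔ α.box ∈ Δ := by
  unfold vDeltaS4; split_ifs with h1 h2 <;> simp_all

lemma vD_eq_o_iff {Δ : Set MF} {α : MF} : vDeltaS4 Δ α = V3.o ↔ (α ∈ Δ ∧ α.box ∉ Δ) := by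
  unfold vDeltaS4; split_ifs with h1 h2 <;> simp_all

lemma vD_eq_z_iff {Δ : Set MF} {α : MF} : vDeltaS4 Δ α = V3.z ↔ (α ∉ Δ ∧ α.box ∉ Δ) := by
  unfold vDeltaS4; split_ifs with h1 h2 <;> simp_all

lemma v3_cases (x : V3) : x = V3.z ∨ x = V3.o ∨ x = V3.t := by cases x <;> simp

lemma vD_des {Δ : Set MF} {α : MF} (h : α ∈ Δ) :
    vDeltaS4 Δ α = V3.o ∨ vDeltaS4 Δ α = V3.t := by
  unfold vDeltaS4; split_ifs <;> simp_all

section Canon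
variable {Δ : Set MF} {φ : MF} (hΔ : SatS4 Δ φ)
include hΔ

lemma sat_mem_t {α : MF} (h : vDeltaS4 Δ α = V3.t) : α ∈ Δ :=
  sat_boxT hΔ (vD_eq_t_iff.mp h)

lemma sat_mem_o {α : MF} (h : vDeltaS4 Δ α = V3.o) : α ∈ Δ := (vD_eq_o_iff.mp h).1

lemma canonical_isval : IsVal (vDeltaS4 Δ) := by
  refine ⟨?_, ?_, ?_, ?_, ?_⟩
  · -- neg
    intro α
    rcases v3_cases (vDeltaS4 Δ α) with hx | hx | hx <;> rw [hx]
    · have hα : α ∉ Δ := (vD_eq_z_iff.mp hx).1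
      have hn : α.neg ∈ Δ := sat_neg_of_notMem hΔ hα
      rcases vD_des hn with h | h <;> simp [negOp, h]
    · have hα : α ∈ Δ := sat_mem_o hΔ hx
      have hn : α.neg ∉ Δ := fun hc => sat_not_both hΔ hα hc
      have hbn : α.neg.box ∉ Δ := fun hc => hn (sat_boxT hΔ hc)
      simp [negOp, vD_eq_z_iff.mpr ⟨hn, hbn⟩]
    · have hα : α ∈ Δ := sat_mem_t hΔ hx
      have hn : α.neg ∉ Δ := fun hc => sat_not_both hΔ hα hc
      have hbn : α.neg.box ∉ Δ := fun hc => hn (sat_boxT hΔ hc)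
      simp [negOp, vD_eq_z_iff.mpr ⟨hn, hbn⟩]
  · -- box
    intro α
    rcases v3_cases (vDeltaS4 Δ α) with hx | hx | hx <;> rw [hx]
    · obtain ⟨h1, h2⟩ := vD_eq_z_iff.mp hx
      have hbb : α.box.box ∉ Δ := fun hc => h2 (sat_boxT hΔ hc)
      simp [boxOp, vD_eq_z_iff.mpr ⟨h2, hbb⟩]
    · obtain ⟨h1, h2⟩ := vD_eq_o_iff.mp hx
      have hbb : α.box.box ∉ Δ := fun hc => h2 (sat_boxT hΔ hc)
      simp [boxOp, vD_eq_z_iff.mpr ⟨h2, hbb⟩]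
    · have h1 : α.box ∈ Δ := vD_eq_t_iff.mp hx
      have h2 : α.box.box ∈ Δ := sat_mp hΔ (sat_mem_of_thm hΔ (S4Thm.axFour α)) h1
      simp [boxOp, vD_eq_t_iff.mpr h2]
  · -- imp
    intro α β
    have timp : vDeltaS4 Δ β = V3.t → vDeltaS4 Δ (α.imp β) = V3.t := by
      intro h
      have hb : β.box ∈ Δ := vD_eq_t_iff.mp h
      exact vD_eq_t_iff.mpr (sat_mp hΔ (sat_mem_of_thm hΔ (thm_boxMono (S4Thm.ax1 β α))) hb)
    have zimp : α ∉ Δ → (α.imp β) ∈ Δ := fun h =>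
      (sat_imp_iff hΔ).mpr (fun hc => absurd hc h)
    have nimp : α ∈ Δ → β ∉ Δ → vDeltaS4 Δ (α.imp β) = V3.z := by
      intro ha hb
      have h1 : (α.imp β) ∉ Δ := fun hc => hb (sat_mp hΔ hc ha)
      exact vD_eq_z_iff.mpr ⟨h1, fun hc => h1 (sat_boxT hΔ hc)⟩
    rcases v3_cases (vDeltaS4 Δ α) with hx | hx | hx <;>
      rcases v3_cases (vDeltaS4 Δ β) with hy | hy | hy <;> rw [hx, hy]
    · rcases vD_des (zimp (vD_eq_z_iff.mp hx).1) with h | h <;> simp [impOp, h]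
    · rcases vD_des (zimp (vD_eq_z_iff.mp hx).1) with h | h <;> simp [impOp, h]
    · simp [impOp, timp hy]
    · simp [impOp, nimp (sat_mem_o hΔ hx) (vD_eq_z_iff.mp hy).1]
    · have hmem : (α.imp β) ∈ Δ := (sat_imp_iff hΔ).mpr (fun _ => sat_mem_o hΔ hy)
      rcases vD_des hmem with h | h <;> simp [impOp, h]
    · simp [impOp, timp hy]
    · simp [impOp, nimp (sat_mem_t hΔ hx) (vD_eq_z_iff.mp hy).1]
    · -- (t, o)
      have hbox : (α.imp β).box ∉ Δ := by
        intro hc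
        have hK := sat_mp hΔ (sat_mem_of_thm hΔ (S4Thm.axK α β)) hc
        have := sat_mp hΔ hK (vD_eq_t_iff.mp hx)
        exact (vD_eq_o_iff.mp hy).2 this
      have hmem : (α.imp β) ∈ Δ := (sat_imp_iff hΔ).mpr (fun _ => sat_mem_o hΔ hy)
      simp [impOp, vD_eq_o_iff.mpr ⟨hmem, hbox⟩]
    · simp [impOp, timp hy]
  · -- dis
    intro α β
    have tl : vDeltaS4 Δ α = V3.t → vDeltaS4 Δ (α.dis β) = V3.t := fun h =>
      vD_eq_t_iff.mpr (sat_mp hΔ (sat_mem_of_thm hΔ (thm_boxMono (S4Thm.ax6 α β)))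
        (vD_eq_t_iff.mp h))
    have tr : vDeltaS4 Δ β = V3.t → vDeltaS4 Δ (α.dis β) = V3.t := fun h =>
      vD_eq_t_iff.mpr (sat_mp hΔ (sat_mem_of_thm hΔ (thm_boxMono (S4Thm.ax7 α β)))
        (vD_eq_t_iff.mp h))
    have desl : α ∈ Δ ∨ β ∈ Δ → vDeltaS4 Δ (α.dis β) = V3.o ∨ vDeltaS4 Δ (α.dis β) = V3.t :=
      fun h => vD_des ((sat_dis_iff hΔ).mpr h)
    rcases v3_cases (vDeltaS4 Δ α) with hx | hx | hx <;>
      rcases v3_cases (vDeltaS4 Δ β) with hy | hy | hy <;> rw [hx, hy]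
    · have h1 : (α.dis β) ∉ Δ := fun hc => by
        rcases (sat_dis_iff hΔ).mp hc with h | h
        exacts [(vD_eq_z_iff.mp hx).1 h, (vD_eq_z_iff.mp hy).1 h]
      simp [disOp, vD_eq_z_iff.mpr ⟨h1, fun hc => h1 (sat_boxT hΔ hc)⟩]
    · rcases desl (Or.inr (sat_mem_o hΔ hy)) with h | h <;> simp [disOp, h]
    · simp [disOp, tr hy]
    · rcases desl (Or.inl (sat_mem_o hΔ hx)) with h | h <;> simp [disOp, h]
    · rcases desl (Or.inl (sat_mem_o hΔ hx)) with h | h <;> simp [disOp, h]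
    · simp [disOp, tr hy]
    · simp [disOp, tl hx]
    · simp [disOp, tl hx]
    · simp [disOp, tl hx]
  · -- con
    intro α β
    have zl : α ∉ Δ → vDeltaS4 Δ (α.con β) = V3.z := by
      intro h
      have h1 : (α.con β) ∉ Δ := fun hc => h ((sat_con_iff hΔ).mp hc).1
      exact vD_eq_z_iff.mpr ⟨h1, fun hc => h1 (sat_boxT hΔ hc)⟩
    have zr : β ∉ Δ → vDeltaS4 Δ (α.con β) = V3.z := by
      intro h
      have h1 : (α.con β) ∉ Δ := fun hc => h ((sat_con_iff hΔ).mp hc).2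
      exact vD_eq_z_iff.mpr ⟨h1, fun hc => h1 (sat_boxT hΔ hc)⟩
    have omemcase : α ∈ Δ → β ∈ Δ → (α.con β).box ∉ Δ → vDeltaS4 Δ (α.con β) = V3.o :=
      fun h1 h2 h3 => vD_eq_o_iff.mpr ⟨(sat_con_iff hΔ).mpr ⟨h1, h2⟩, h3⟩
    have nbl : α.box ∉ Δ → (α.con β).box ∉ Δ := fun h hc =>
      h (sat_mp hΔ (sat_mem_of_thm hΔ (thm_boxMono (S4Thm.ax4 α β))) hc)
    have nbr : β.box ∉ Δ → (α.con β).box ∉ Δ := fun h hc =>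
      h (sat_mp hΔ (sat_mem_of_thm hΔ (thm_boxMono (S4Thm.ax5 α β))) hc)
    rcases v3_cases (vDeltaS4 Δ α) with hx | hx | hx <;>
      rcases v3_cases (vDeltaS4 Δ β) with hy | hy | hy <;> rw [hx, hy]
    · simp [conOp, zl (vD_eq_z_iff.mp hx).1]
    · simp [conOp, zl (vD_eq_z_iff.mp hx).1]
    · simp [conOp, zl (vD_eq_z_iff.mp hx).1]
    · simp [conOp, zr (vD_eq_z_iff.mp hy).1]
    · simp [conOp, omemcase (sat_mem_o hΔ hx) (sat_mem_o hΔ hy) (nbl (vD_eq_o_iff.mp hx).2)]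
    · simp [conOp, omemcase (sat_mem_o hΔ hx) (sat_mem_t hΔ hy) (nbl (vD_eq_o_iff.mp hx).2)]
    · simp [conOp, zr (vD_eq_z_iff.mp hy).1]
    · simp [conOp, omemcase (sat_mem_t hΔ hx) (sat_mem_o hΔ hy) (nbr (vD_eq_o_iff.mp hy).2)]
    · -- (t,t)
      have h1 : (β.imp (α.con β)).box ∈ Δ :=
        sat_mp hΔ (sat_mem_of_thm hΔ (thm_boxMono (S4Thm.ax3 α β))) (vD_eq_t_iff.mp hx)
      have h2 : (α.con β).box ∈ Δ :=
        sat_mp hΔ (sat_mp hΔ (sat_mem_of_thm hΔ (S4Thm.axK β (α.con β))) h1)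
          (vD_eq_t_iff.mp hy)
      simp [conOp, vD_eq_t_iff.mpr h2]

end Canon

/-! ### The canonical family of partial level valuations -/

def Scan : Set (MF → V3) := {f | ∃ Δ ψ, SatS4 Δ ψ ∧ f = vDeltaS4 Δ}

lemma isPVal_of_isVal {Λ : Set MF} {v : MF → V3} (h : IsVal v) : IsPVal Λ v :=
  ⟨fun α _ => h.1 α, fun α _ => h.2.1 α, fun α β _ => h.2.2.1 α β,
   fun α β _ => h.2.2.2.1 α β, fun α β _ => h.2.2.2.2 α β⟩

lemma scan_pval (Λ : Set MF) : ∀ v ∈ Scan, IsPVal Λ v := by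
  rintro v ⟨Δ, ψ, hΔ, rfl⟩
  exact isPVal_of_isVal (canonical_isval hΔ)

lemma scan_wit : ∀ v ∈ Scan, ∀ α, v α = V3.o →
    ∃ w ∈ Scan, w α = V3.z ∧ ∀ β, v β = V3.t → w β = V3.t := by
  rintro v ⟨Δ, ψ, hΔ, rfl⟩ α hα
  obtain ⟨hαΔ, hbα⟩ := vD_eq_o_iff.mp hα
  set B : Set MF := {γ | γ ∈ Δ ∧ ∃ β : MF, γ = β.box} with hB
  have hnd : ¬ Dv B α := by
    rintro ⟨l, hl, hp⟩
    have h1 : S4Thm ((l.foldr MF.imp α).box) := S4Thm.nec (fold_of_prf hp)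
    have h2 : S4Thm ((l.map MF.box).foldr MF.imp α.box) :=
      S4Thm.mp (thm_foldBox α l) h1
    have h3 : Dv Δ α.box := by
      refine ⟨l.map MF.box, ?_, prf_of_fold h2⟩
      intro γ hγ
      obtain ⟨β, hβl, rfl⟩ := List.mem_map.mp hγ
      obtain ⟨hβΔ, δ, rfl⟩ := hl β hβl
      exact sat_mp hΔ (sat_mem_of_thm hΔ (S4Thm.axFour δ)) hβΔ
    exact hbα (sat_mem_of_dv hΔ h3)
  obtain ⟨Δ', hBΔ', hΔ'⟩ := lindenbaum hnd
  refine ⟨vDeltaS4 Δ', ⟨Δ', α, hΔ', rfl⟩, ?_, ?_⟩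
  · have h1 : α ∉ Δ' := fun hc => sat_not_dv hΔ' (dv_of_mem hc)
    exact vD_eq_z_iff.mpr ⟨h1, fun hc => h1 (sat_boxT hΔ' hc)⟩
  · intro β hβ
    have h1 : β.box ∈ Δ := vD_eq_t_iff.mp hβ
    have h2 : β.box ∈ B := ⟨h1, β, rfl⟩
    have h3 : β.box ∈ Δ' := hBΔ' h2
    exact vD_eq_t_iff.mpr h3

/-! ### Kripke-style forcing over a self-witnessing family -/

def Fc (S : Set (MF → V3)) (Λ : Set MF) : MF → (MF → V3) → Prop
  | .var n, w => w (.var n) ∈ Des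
  | .neg α, w => ¬ Fc S Λ α w
  | .box α, w => ∀ u ∈ S, (∀ β ∈ Λ, w β = V3.t → u β = V3.t) → Fc S Λ α u
  | .imp α β, w => Fc S Λ α w → Fc S Λ β w
  | .dis α β, w => Fc S Λ α w ∨ Fc S Λ β w
  | .con α β, w => Fc S Λ α w ∧ Fc S Λ β w

lemma fc_sound {S : Set (MF → V3)} {Λ : Set MF} {ψ : MF} (h : S4Thm ψ) :
    ∀ w ∈ S, Fc S Λ ψ w := by
  induction h with
  | ax1 α β => intro w hw; simp only [Fc]; tauto
  | ax2 α β γ => intro w hw; simp only [Fc]; tauto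
  | ax3 α β => intro w hw; simp only [Fc]; tauto
  | ax4 α β => intro w hw; simp only [Fc]; tauto
  | ax5 α β => intro w hw; simp only [Fc]; tauto
  | ax6 α β => intro w hw; simp only [Fc]; tauto
  | ax7 α β => intro w hw; simp only [Fc]; tauto
  | ax8 α β γ => intro w hw; simp only [Fc]; tauto
  | ax9 α β => intro w hw; simp only [Fc]; tauto
  | ax10 α β => intro w hw; simp only [Fc]; tauto
  | dne α => intro w hw; simp only [Fc]; tauto
  | axK α β =>
    intro w hw; simp only [Fc]
    intro h1 h2 u hu hR
    exact h1 u hu hR (h2 u hu hR)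
  | axT α =>
    intro w hw; simp only [Fc]
    intro h1
    exact h1 w hw (fun β _ hh => hh)
  | axFour α =>
    intro w hw; simp only [Fc]
    intro h1 u hu hR u' hu' hR'
    exact h1 u' hu' (fun β hβ hh => hR' β hβ (hR β hβ hh))
  | mp _ _ ih1 ih2 => intro w hw; exact ih1 w hw (ih2 w hw)
  | nec _ ih =>
    intro w hw; simp only [Fc]
    intro u hu _
    exact ih u hu

lemma truth_lemma {S : Set (MF → V3)} {Λ : Set MF}
    (hpv : ∀ v ∈ S, IsPVal Λ v)
    (hwit : ∀ v ∈ S, ∀ α ∈ Λ, v α = V3.o →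
      ∃ w ∈ S, w α = V3.z ∧ ∀ β ∈ Λ, v β = V3.t → w β = V3.t)
    (hcl : SubClosed Λ) :
    ∀ α ∈ Λ, ∀ w ∈ S, (Fc S Λ α w ↔ w α ∈ Des) := by
  intro α
  induction α with
  | var n => intro _ w hw; simp [Fc]
  | neg α ih =>
    intro hmem w hw
    have hα : α ∈ Λ := hcl.1 α hmem
    have hc := (hpv w hw).1 α hmem
    simp only [Fc]
    rw [ih hα w hw]
    rcases v3_cases (w α) with h1 | h1 | h1 <;>
      rcases v3_cases (w α.neg) with h2 | h2 | h2 <;>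
      rw [h1] at hc <;> rw [h2] at hc <;> rw [h1, h2] <;> revert hc <;>
      simp only [negOp, Des, Set.mem_insert_iff, Set.mem_singleton_iff] <;> decide
  | box α ih =>
    intro hmem w hw
    have hα : α ∈ Λ := hcl.2.1 α hmem
    have hc := (hpv w hw).2.1 α hmem
    simp only [Fc]
    constructor
    · intro h
      rcases v3_cases (w α) with h1 | h1 | h1
      · have h2 := (ih hα w hw).mp (h w hw (fun β _ hh => hh))
        rw [h1] at h2; simp [Des] at h2
      · obtain ⟨u, hu, huz, hpres⟩ := hwit w hw α hα h1
        have h2 := (ih hα u hu).mp (h u hu hpres)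
        rw [huz] at h2; simp [Des] at h2
      · rw [h1] at hc
        simp only [boxOp, Set.mem_singleton_iff] at hc
        rw [hc]; simp [Des]
    · intro h u hu hR
      have hwα : w α = V3.t := by
        rcases v3_cases (w α) with h1 | h1 | h1
        · rw [h1] at hc; simp only [boxOp, Set.mem_singleton_iff] at hc
          rw [hc] at h; simp [Des] at h
        · rw [h1] at hc; simp only [boxOp, Set.mem_singleton_iff] at hc
          rw [hc] at h; simp [Des] at h
        · exact h1
      have hu2 : u α = V3.t := hR α hα hwα
      exact (ih hα u hu).mpr (by rw [hu2]; simp [Des])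
  | imp α β ihα ihβ =>
    intro hmem w hw
    obtain ⟨hα, hβ⟩ := hcl.2.2.1 α β hmem
    have hc := (hpv w hw).2.2.1 α β hmem
    simp only [Fc]
    rw [ihα hα w hw, ihβ hβ w hw]
    rcases v3_cases (w α) with h1 | h1 | h1 <;>
      rcases v3_cases (w β) with h2 | h2 | h2 <;>
      rcases v3_cases (w (α.imp β)) with h3 | h3 | h3 <;>
      rw [h1, h2, h3] at hc ⊢ <;> revert hc <;>
      simp only [impOp, Des, Set.mem_insert_iff, Set.mem_singleton_iff] <;> decide
  | dis α β ihα ihβ =>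
    intro hmem w hw
    obtain ⟨hα, hβ⟩ := hcl.2.2.2.1 α β hmem
    have hc := (hpv w hw).2.2.2.1 α β hmem
    simp only [Fc]
    rw [ihα hα w hw, ihβ hβ w hw]
    rcases v3_cases (w α) with h1 | h1 | h1 <;>
      rcases v3_cases (w β) with h2 | h2 | h2 <;>
      rcases v3_cases (w (α.dis β)) with h3 | h3 | h3 <;>
      rw [h1, h2, h3] at hc ⊢ <;> revert hc <;>
      simp only [disOp, Des, Set.mem_insert_iff, Set.mem_singleton_iff] <;> decide
  | con α β ihα ihβ =>
    intro hmem w hw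
    obtain ⟨hα, hβ⟩ := hcl.2.2.2.2 α β hmem
    have hc := (hpv w hw).2.2.2.2 α β hmem
    simp only [Fc]
    rw [ihα hα w hw, ihβ hβ w hw]
    rcases v3_cases (w α) with h1 | h1 | h1 <;>
      rcases v3_cases (w β) with h2 | h2 | h2 <;>
      rcases v3_cases (w (α.con β)) with h3 | h3 | h3 <;>
      rw [h1, h2, h3] at hc ⊢ <;> revert hc <;>
      simp only [conOp, Des, Set.mem_insert_iff, Set.mem_singleton_iff] <;> decide

/-! ### Subformulas -/

lemma mem_subf_self (φ : MF) : φ ∈ φ.subf := by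
  cases φ <;> simp [MF.subf]

lemma subf_trans : ∀ φ ψ : MF, ψ ∈ φ.subf → ψ.subf ⊆ φ.subf := by
  intro φ
  induction φ with
  | var n => intro ψ h; simp [MF.subf] at h; subst h; simp [MF.subf]
  | neg α ih =>
    intro ψ h
    simp only [MF.subf, Finset.mem_insert] at h
    rcases h with rfl | h
    · exact subset_rfl
    · exact (ih ψ h).trans (Finset.subset_insert _ _)
  | box α ih =>
    intro ψ h
    simp only [MF.subf, Finset.mem_insert] at h
    rcases h with rfl | h
    · exact subset_rfl
    · exact (ih ψ h).trans (Finset.subset_insert _ _)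
  | imp α β ihα ihβ =>
    intro ψ h
    simp only [MF.subf, Finset.mem_insert, Finset.mem_union] at h
    rcases h with rfl | h | h
    · exact subset_rfl
    · exact (ihα ψ h).trans (Finset.subset_union_left.trans (Finset.subset_insert _ _))
    · exact (ihβ ψ h).trans (Finset.subset_union_right.trans (Finset.subset_insert _ _))
  | dis α β ihα ihβ =>
    intro ψ h
    simp only [MF.subf, Finset.mem_insert, Finset.mem_union] at h
    rcases h with rfl | h | h
    · exact subset_rfl
    · exact (ihα ψ h).trans (Finset.subset_union_left.trans (Finset.subset_insert _ _))
    · exact (ihβ ψ h).trans (Finset.subset_union_right.trans (Finset.subset_insert _ _))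
  | con α β ihα ihβ =>
    intro ψ h
    simp only [MF.subf, Finset.mem_insert, Finset.mem_union] at h
    rcases h with rfl | h | h
    · exact subset_rfl
    · exact (ihα ψ h).trans (Finset.subset_union_left.trans (Finset.subset_insert _ _))
    · exact (ihβ ψ h).trans (Finset.subset_union_right.trans (Finset.subset_insert _ _))

lemma subf_closed (φ : MF) : SubClosed (↑φ.subf : Set MF) := by
  refine ⟨?_, ?_, ?_, ?_, ?_⟩
  · intro α h
    have h' : α.neg ∈ φ.subf := h
    have : α ∈ (α.neg).subf := by simp [MF.subf, mem_subf_self]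
    exact subf_trans φ _ h' this
  · intro α h
    have h' : α.box ∈ φ.subf := h
    have : α ∈ (α.box).subf := by simp [MF.subf, mem_subf_self]
    exact subf_trans φ _ h' this
  · intro α β h
    have h' : α.imp β ∈ φ.subf := h
    have h1 : α ∈ (α.imp β).subf := by simp [MF.subf, mem_subf_self]
    have h2 : β ∈ (α.imp β).subf := by simp [MF.subf, mem_subf_self]
    exact ⟨subf_trans φ _ h' h1, subf_trans φ _ h' h2⟩
  · intro α β h
    have h' : α.dis β ∈ φ.subf := h
    have h1 : α ∈ (α.dis β).subf := by simp [MF.subf, mem_subf_self]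
    have h2 : β ∈ (α.dis β).subf := by simp [MF.subf, mem_subf_self]
    exact ⟨subf_trans φ _ h' h1, subf_trans φ _ h' h2⟩
  · intro α β h
    have h' : α.con β ∈ φ.subf := h
    have h1 : α ∈ (α.con β).subf := by simp [MF.subf, mem_subf_self]
    have h2 : β ∈ (α.con β).subf := by simp [MF.subf, mem_subf_self]
    exact ⟨subf_trans φ _ h' h1, subf_trans φ _ h' h2⟩

end S4Aux

open S4Aux in
/-- Decision procedure for S4: ⊢_S4 φ iff every partial level
valuation over the set of subformulas of φ gives φ the value 2. -/
theorem s4_decision (φ : MF) :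
    S4Thm φ ↔ ∀ v ∈ PLV (↑φ.subf : Set MF), v φ = V3.t := by
  constructor
  · intro hφ v hv
    obtain ⟨S, ⟨hpv, hwit⟩, hvS⟩ := hv
    have hcl := subf_closed φ
    have hm : φ ∈ (↑φ.subf : Set MF) := mem_subf_self φ
    have tl := truth_lemma hpv hwit hcl
    have h1 : v φ ∈ Des := (tl φ hm v hvS).mp (fc_sound hφ v hvS)
    rcases v3_cases (v φ) with h | h | h
    · rw [h] at h1; simp [Des] at h1
    · obtain ⟨w, hwS, hwz, _⟩ := hwit v hvS φ hm h
      have h2 : w φ ∈ Des := (tl φ hm w hwS).mp (fc_sound hφ w hwS)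
      rw [hwz] at h2; simp [Des] at h2
    · exact h
  · intro h
    by_contra hφ
    have hnd : ¬ Dv (∅ : Set MF) φ := by
      rintro ⟨l, hl, hp⟩
      rcases l with _ | ⟨b, l⟩
      · exact hφ (prf_nil hp)
      · exact absurd (hl b (by simp)) (Set.notMem_empty b)
    obtain ⟨Δ, _, hΔ⟩ := lindenbaum hnd
    have hv : vDeltaS4 Δ ∈ PLV (↑φ.subf : Set MF) := by
      refine ⟨Scan, ⟨scan_pval _, ?_⟩, ⟨Δ, φ, hΔ, rfl⟩⟩
      intro v hvS α _ hα
      obtain ⟨w, hwS, hwz, hpres⟩ := scan_wit v hvS α hα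
      exact ⟨w, hwS, hwz, fun β _ hβ => hpres β hβ⟩
    have ht := h _ hv
    have hmem : φ ∈ Δ := sat_boxT hΔ (vD_eq_t_iff.mp ht)
    exact sat_not_dv hΔ (dv_of_mem hmem)
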